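/- Let (B, S) be an instance of the 3-partition problem: B ∈ ℕ and S = (k_1, …, k_{3m}) with Σ_{j=1}^{3m} k_j = mB and B/4 < k_j < B/2 for all j. Let A_{B,S} be the symbolic heap ⋀_{i=1}^{m} (d_{i+1} = d_i + B + 1) ∧ ⋀_{j=1}^{3m} (d_1 ≤ a_j ∧ a_j + k_j < d_{m+1}) : ⊛_{i=1}^{m+1} array(d_i, d_i) * ⊛_{j=1}^{3m} array(a_j + 1, a_j + k_j). Then A_{B,S} is satisfiable if and only if there exists a complete 3-partition of S with respect to B, i.e., a partition of the indices {1,…,3m} into m triples such that the three values k in each triple sum to exactly B. -/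

import Mathlib

/-! ## Array separation logic (ASL): syntax and stack-heap semantics -/

/-- Terms of array separation logic: variables (named by naturals), constants,
addition, and multiplication by a constant. -/
inductive Trm : Type where
  | var : ℕ → Trm
  | const : ℕ → Trm
  | add : Trm → Trm → Trm
  | smul : ℕ → Trm → Trm

/-- A stack maps variables to naturals. -/
abbrev Stack := ℕ → ℕ

/-- Evaluation of terms under a stack. -/
def Trm.eval (s : Stack) : Trm → ℕ
  | .var x => s x
  | .const n => n
  | .add t u => t.eval s + u.eval s
  | .smul n t => n * t.eval s

/-- Variables occurring in a term. -/
def Trm.vars : Trm → Set ℕ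
  | .var x => {x}
  | .const _ => ∅
  | .add t u => t.vars ∪ u.vars
  | .smul _ t => t.vars

/-- Pure formulas: conjunctions of atomic arithmetic constraints. -/
inductive PureF : Type where
  | tru : PureF
  | eq : Trm → Trm → PureF
  | ne : Trm → Trm → PureF
  | le : Trm → Trm → PureF
  | lt : Trm → Trm → PureF
  | and : PureF → PureF → PureF

/-- Satisfaction of pure formulas (depends only on the stack). -/
def PureF.sat (s : Stack) : PureF → Prop
  | .tru => True
  | .eq t u => t.eval s = u.eval s
  | .ne t u => t.eval s ≠ u.eval s
  | .le t u => t.eval s ≤ u.eval s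
  | .lt t u => t.eval s < u.eval s
  | .and p q => p.sat s ∧ q.sat s

def PureF.vars : PureF → Set ℕ
  | .tru => ∅
  | .eq t u => t.vars ∪ u.vars
  | .ne t u => t.vars ∪ u.vars
  | .le t u => t.vars ∪ u.vars
  | .lt t u => t.vars ∪ u.vars
  | .and p q => p.vars ∪ q.vars

/-- The (top-level) terms occurring in a pure formula. -/
def PureF.trms : PureF → List Trm
  | .tru => []
  | .eq t u => [t, u]
  | .ne t u => [t, u]
  | .le t u => [t, u]
  | .lt t u => [t, u]
  | .and p q => p.trms ++ q.trms

/-- The conjuncts of a pure formula. -/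
def PureF.conjuncts : PureF → List PureF
  | .and p q => p.conjuncts ++ q.conjuncts
  | p => [p]

/-- Finite conjunction. -/
def bigAnd : List PureF → PureF
  | [] => .tru
  | p :: ps => .and p (bigAnd ps)

/-- Spatial formulas: `emp`, points-to, arrays, and separating conjunction. -/
inductive Spatial : Type where
  | emp : Spatial
  | pto : Trm → Trm → Spatial
  | arr : Trm → Trm → Spatial
  | star : Spatial → Spatial → Spatial

/-- Heaps: finite partial functions from ℕ (locations) to ℕ (values). -/
abbrev Heap := Finmap (fun _ : ℕ => ℕ)

/-- Satisfaction of spatial formulas. -/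
def Spatial.sat (s : Stack) : Spatial → Heap → Prop
  | .emp, h => h = ∅
  | .pto t u, h =>
      h.keys = {Trm.eval s t} ∧ Finmap.lookup (Trm.eval s t) h = some (Trm.eval s u)
  | .arr t u, h =>
      Trm.eval s t ≤ Trm.eval s u ∧ h.keys = Finset.Icc (Trm.eval s t) (Trm.eval s u)
  | .star F G, h =>
      ∃ h₁ h₂ : Heap, h₁.Disjoint h₂ ∧ h = h₁ ∪ h₂ ∧ F.sat s h₁ ∧ G.sat s h₂

def Spatial.vars : Spatial → Set ℕ
  | .emp => ∅
  | .pto t u => t.vars ∪ u.vars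
  | .arr t u => t.vars ∪ u.vars
  | .star F G => F.vars ∪ G.vars

/-- The (top-level) terms occurring in a spatial formula. -/
def Spatial.trms : Spatial → List Trm
  | .emp => []
  | .pto t u => [t, u]
  | .arr t u => [t, u]
  | .star F G => F.trms ++ G.trms

/-- The points-to atoms of a spatial formula, as (address, value) pairs. -/
def Spatial.ptos : Spatial → List (Trm × Trm)
  | .emp => []
  | .pto t u => [(t, u)]
  | .arr _ _ => []
  | .star F G => F.ptos ++ G.ptos

/-- The array atoms of a spatial formula, as endpoint pairs. -/
def Spatial.arrs : Spatial → List (Trm × Trm)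
  | .emp => []
  | .pto _ _ => []
  | .arr t u => [(t, u)]
  | .star F G => F.arrs ++ G.arrs

/-- The arrays of the array abstraction `⟨A⟩`: each points-to `c ↦ d` is
replaced by the single-cell array `array(c,c)`. -/
def Spatial.absArrays : Spatial → List (Trm × Trm)
  | .emp => []
  | .pto t _ => [(t, t)]
  | .arr t u => [(t, u)]
  | .star F G => F.absArrays ++ G.absArrays

/-- Finite separating conjunction. -/
def bigStar : List Spatial → Spatial
  | [] => .emp
  | F :: Fs => .star F (bigStar Fs)

/-- Quantifier-free symbolic heaps `Π : F`. -/
structure SymHeap : Type where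
  pure : PureF
  spatial : Spatial

/-- Satisfaction of quantifier-free symbolic heaps. -/
def SymHeap.sat (s : Stack) (h : Heap) (A : SymHeap) : Prop :=
  A.pure.sat s ∧ A.spatial.sat s h

def SymHeap.vars (A : SymHeap) : Set ℕ := A.pure.vars ∪ A.spatial.vars

/-- All (top-level) terms occurring in a symbolic heap. -/
def SymHeap.trms (A : SymHeap) : List Trm := A.pure.trms ++ A.spatial.trms

/-- Lifting `*` to symbolic heaps: conjoin pure parts, `*`-conjoin spatial parts. -/
def SymHeap.star (A X : SymHeap) : SymHeap :=
  ⟨.and A.pure X.pure, .star A.spatial X.spatial⟩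

/-- Satisfiability of a symbolic heap. -/
def SymHeap.Satisfiable (A : SymHeap) : Prop := ∃ (s : Stack) (h : Heap), A.sat s h

/-- Semantic entailment between quantifier-free symbolic heaps. -/
def Entails (A B : SymHeap) : Prop := ∀ (s : Stack) (h : Heap), A.sat s h → B.sat s h

/-- Existentially quantified symbolic heaps `∃ z⃗. Π : F`. -/
structure QSymHeap : Type where
  bound : List ℕ
  body : SymHeap

/-- Satisfaction of quantified symbolic heaps: some extension of the stack on the
bound variables satisfies the body. -/
def QSymHeap.sat (s : Stack) (h : Heap) (B : QSymHeap) : Prop :=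
  ∃ s' : Stack, (∀ x : ℕ, x ∉ B.bound → s' x = s x) ∧ B.body.sat s' h

/-! ## The arithmetic encodings γ, β, φ, ψ₁, ψ₂, χ (interpreted over stacks) -/

/-- `s ⊨ γ(A)`: the Presburger satisfiability encoding of `A`, i.e. the pure part
of `A` together with well-definedness and pairwise disjointness of the arrays of
the array abstraction `⟨A⟩`. -/
def gammaSat (A : SymHeap) (s : Stack) : Prop :=
  A.pure.sat s ∧
  (∀ p ∈ A.spatial.absArrays, Trm.eval s p.1 ≤ Trm.eval s p.2) ∧
  A.spatial.absArrays.Pairwise (fun p q =>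
    Trm.eval s p.2 < Trm.eval s q.1 ∨ Trm.eval s q.2 < Trm.eval s p.1)

/-- `s ⊨ β(A,B)`. -/
def betaSat (A B : SymHeap) (s : Stack) : Prop :=
  gammaSat A s ∧ gammaSat B s ∧
  (∀ p ∈ B.spatial.ptos, ∀ q ∈ A.spatial.arrs,
      Trm.eval s p.1 < Trm.eval s q.1 ∨ Trm.eval s p.1 > Trm.eval s q.2) ∧
  (∀ p ∈ A.spatial.ptos, ∀ q ∈ B.spatial.ptos,
      Trm.eval s p.1 ≠ Trm.eval s q.1 ∨ Trm.eval s p.2 = Trm.eval s q.2)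

/-- The term set `Terms(A,B)`: all terms occurring in `A` and `B`, together with
the successor terms `b_i + 1`, `d_i + 1` (array right endpoints) and
`t_i + 1`, `v_i + 1` (points-to addresses). -/
def termSet (A B : SymHeap) : List Trm :=
  A.trms ++ B.trms ++
  (A.spatial.arrs.map fun p => Trm.add p.2 (Trm.const 1)) ++
  (B.spatial.arrs.map fun p => Trm.add p.2 (Trm.const 1)) ++
  (A.spatial.ptos.map fun p => Trm.add p.1 (Trm.const 1)) ++
  (B.spatial.ptos.map fun p => Trm.add p.1 (Trm.const 1))

/-- A solution seed for the biabduction instance `(A,B)`. -/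
def IsSolutionSeed (A B : SymHeap) (Δ : PureF) : Prop :=
  (∃ s : Stack, Δ.sat s) ∧
  (∀ s : Stack, Δ.sat s → betaSat A B s) ∧
  (∀ δ ∈ Δ.conjuncts, ∃ t ∈ termSet A B, ∃ u ∈ termSet A B,
      δ = PureF.lt t u ∨ δ = PureF.eq t u) ∧
  (∀ t ∈ termSet A B, ∀ u ∈ termSet A B, ∃ δ ∈ Δ.conjuncts,
      δ = PureF.lt t u ∨ δ = PureF.lt u t ∨ δ = PureF.eq t u)

/-- The (quantifier-free) biabduction problem `(A,B)` has a solution. -/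
def HasBiabductionSolution (A B : SymHeap) : Prop :=
  ∃ X Y : SymHeap, (A.star X).Satisfiable ∧ Entails (A.star X) (B.star Y)

/-- `s ⊨ φ(A,B)` (over the array abstractions of `A` and `B`). -/
def phiSat (A B : SymHeap) (s : Stack) : Prop :=
  ∃ x : ℕ,
    (∃ p ∈ A.spatial.absArrays, Trm.eval s p.1 ≤ x ∧ x ≤ Trm.eval s p.2) ∧
    ∀ q ∈ B.spatial.absArrays, x < Trm.eval s q.1 ∨ x > Trm.eval s q.2

/-- `s ⊨ ψ₁(A,B)`: some points-to address of `B` is covered by an array of `A`. -/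
def psi1Sat (A B : SymHeap) (s : Stack) : Prop :=
  ∃ p ∈ A.spatial.arrs, ∃ q ∈ B.spatial.ptos,
    Trm.eval s p.1 ≤ Trm.eval s q.1 ∧ Trm.eval s q.1 ≤ Trm.eval s p.2

/-- `s ⊨ ψ₂(A,B)`: some pointers of `A` and `B` share an address but disagree on
their contents. -/
def psi2Sat (A B : SymHeap) (s : Stack) : Prop :=
  ∃ p ∈ A.spatial.ptos, ∃ q ∈ B.spatial.ptos,
    Trm.eval s p.1 = Trm.eval s q.1 ∧ Trm.eval s p.2 ≠ Trm.eval s q.2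

/-- `s ⊨ χ(A, ∃z⃗.Q)`. -/
def chiSat (A : SymHeap) (zs : List ℕ) (Q : SymHeap) (s : Stack) : Prop :=
  gammaSat A s ∧
  ∀ s' : Stack, (∀ x : ℕ, x ∉ zs → s' x = s x) →
    (¬ gammaSat Q s' ∨ phiSat A Q s' ∨ phiSat Q A s' ∨
      psi1Sat A Q s' ∨ psi2Sat A Q s')

/-! ### The 3-partition reduction. Variables: `d_{i+1}` is `var i` for `i ∈ [0,m]`,
and `a_{j+1}` is `var (m+1+j)` for `j ∈ [0,3m)`. -/

/-- The symbolic heap `A_{B,S}`: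
`⋀_{i=1}^{m} (d_{i+1} = dᵢ + B + 1) ∧ ⋀_{j=1}^{3m} (d₁ ≤ aⱼ ∧ aⱼ + kⱼ < d_{m+1})
 : ⊛_{i=1}^{m+1} array(dᵢ,dᵢ) * ⊛_{j=1}^{3m} array(aⱼ+1, aⱼ+kⱼ)`. -/
def heapABS (m B : ℕ) (k : Fin (3 * m) → ℕ) : SymHeap :=
  ⟨PureF.and
      (bigAnd (List.ofFn fun i : Fin m =>
        PureF.eq (Trm.var (i.1 + 1)) (Trm.add (Trm.var i.1) (Trm.const (B + 1)))))
      (bigAnd (List.ofFn fun j : Fin (3 * m) =>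
        PureF.and (PureF.le (Trm.var 0) (Trm.var (m + 1 + j.1)))
          (PureF.lt (Trm.add (Trm.var (m + 1 + j.1)) (Trm.const (k j))) (Trm.var m)))),
   Spatial.star
      (bigStar (List.ofFn fun i : Fin (m + 1) => Spatial.arr (Trm.var i.1) (Trm.var i.1)))
      (bigStar (List.ofFn fun j : Fin (3 * m) =>
        Spatial.arr (Trm.add (Trm.var (m + 1 + j.1)) (Trm.const 1))
          (Trm.add (Trm.var (m + 1 + j.1)) (Trm.const (k j)))))⟩

/-- The symbolic heap `Ã_{B,S}`:
`⋀_{i=1}^{m} (d_{i+1} = dᵢ + B + 1) : ⊛_{i=1}^{m+1} array(dᵢ,dᵢ)`. -/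
def heapAtil (m B : ℕ) : SymHeap :=
  ⟨bigAnd (List.ofFn fun i : Fin m =>
      PureF.eq (Trm.var (i.1 + 1)) (Trm.add (Trm.var i.1) (Trm.const (B + 1)))),
   bigStar (List.ofFn fun i : Fin (m + 1) => Spatial.arr (Trm.var i.1) (Trm.var i.1))⟩

/-- The symbolic heap `B̃_{B,S}`:
`⋀_{i=1}^{m} (d_{i+1} > dᵢ) ∧ ⋀_{j=1}^{3m} (d₁ ≤ aⱼ ∧ aⱼ + kⱼ < d_{m+1})
 : ⊛_{i=1}^{m+1} array(dᵢ,dᵢ) * ⊛_{j=1}^{3m} array(aⱼ+1, aⱼ+kⱼ)`. -/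
def heapBtil (m : ℕ) (k : Fin (3 * m) → ℕ) : SymHeap :=
  ⟨PureF.and
      (bigAnd (List.ofFn fun i : Fin m => PureF.lt (Trm.var i.1) (Trm.var (i.1 + 1))))
      (bigAnd (List.ofFn fun j : Fin (3 * m) =>
        PureF.and (PureF.le (Trm.var 0) (Trm.var (m + 1 + j.1)))
          (PureF.lt (Trm.add (Trm.var (m + 1 + j.1)) (Trm.const (k j))) (Trm.var m)))),
   Spatial.star
      (bigStar (List.ofFn fun i : Fin (m + 1) => Spatial.arr (Trm.var i.1) (Trm.var i.1)))
      (bigStar (List.ofFn fun j : Fin (3 * m) =>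
        Spatial.arr (Trm.add (Trm.var (m + 1 + j.1)) (Trm.const 1))
          (Trm.add (Trm.var (m + 1 + j.1)) (Trm.const (k j)))))⟩

/-- A complete 3-partition of `S = (k₁,…,k_{3m})` w.r.t. `B`: a partition of the
indices into `m` groups of three, each of whose `k`-values sums to `B`. -/
def HasThreePartition (m B : ℕ) (k : Fin (3 * m) → ℕ) : Prop :=
  ∃ f : Fin (3 * m) → Fin m, ∀ i : Fin m,
    (Finset.univ.filter fun j => f j = i).card = 3 ∧
    ∑ j ∈ Finset.univ.filter (fun j => f j = i), k j = B

/-!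
A symbolic heap is satisfiable exactly when some stack satisfies its γ-encoding: the pure part
holds and the arrays of its array abstraction are non-empty and pairwise disjoint (the heap itself
can then be assembled piece by piece).

For `A_{B,S}` the single cells `dᵢ = d₁ + (i - 1)(B + 1)` cut `[d₁, d_{m+1}]` into `m` gaps of
`B` free cells each. An array `aⱼ + 1 … aⱼ + kⱼ` may not cover any `dᵢ`, so it lies inside one
gap, and disjointness bounds the total length placed in each gap by `B`. As the lengths add up to
`mB`, every gap is filled exactly, and `B/4 < kⱼ < B/2` forces exactly three arrays per gap.
Conversely, a 3-partition is realised by packing each triple from the left into its own gap.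
-/

open Finset

lemma Finmap.disjoint_iff_disjoint_keys {α : Type*} {β : α → Type*} {h₁ h₂ : Finmap β} :
    h₁.Disjoint h₂ ↔ _root_.Disjoint h₁.keys h₂.keys := by
  simp [Finmap.Disjoint, Finset.disjoint_left, Finmap.mem_keys]

lemma exists_heap_keys (T : Finset ℕ) : ∃ h : Heap, h.keys = T :=
  ⟨(T.toList.map fun x => ⟨x, 0⟩).toFinmap, by
    ext x; simp [Finmap.mem_keys, Finmap.mem_list_toFinmap]⟩

lemma PureF.sat_bigAnd {s : Stack} {L : List PureF} :
    (bigAnd L).sat s ↔ ∀ p ∈ L, p.sat s := by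
  induction L with
  | nil => simp [bigAnd, PureF.sat]
  | cons p L ih => simp [bigAnd, PureF.sat, ih]

namespace Spatial

lemma absArrays_bigStar_arr {n : ℕ} (t u : Fin n → Trm) :
    (bigStar (List.ofFn fun i => arr (t i) (u i))).absArrays = List.ofFn fun i => (t i, u i) := by
  induction n with
  | zero => rfl
  | succ n ih => simp [List.ofFn_succ, bigStar, absArrays, ih]

def footprint (s : Stack) : Spatial → Finset ℕ
  | .emp => ∅
  | .pto t _ => {t.eval s}
  | .arr t u => Icc (t.eval s) (u.eval s)
  | .star F G => F.footprint s ∪ G.footprint s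

/-- `gammaSat A s` is, by definition, `A.pure.sat s ∧ A.spatial.WellFormed s`. -/
def WellFormed (s : Stack) (F : Spatial) : Prop :=
  (∀ p ∈ F.absArrays, p.1.eval s ≤ p.2.eval s) ∧
  F.absArrays.Pairwise fun p q => p.2.eval s < q.1.eval s ∨ q.2.eval s < p.1.eval s

variable {s : Stack}

lemma mem_footprint {F : Spatial} {x : ℕ} :
    x ∈ F.footprint s ↔ ∃ p ∈ F.absArrays, p.1.eval s ≤ x ∧ x ≤ p.2.eval s := by
  induction F with
  | star F G ihF ihG => simp [footprint, absArrays, ihF, ihG, or_and_right, exists_or]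
  | _ => simp [footprint, absArrays, le_antisymm_iff, and_comm]

lemma wellFormed_star_iff {F G : Spatial} :
    (F.star G).WellFormed s ↔
      F.WellFormed s ∧ G.WellFormed s ∧ _root_.Disjoint (F.footprint s) (G.footprint s) := by
  simp only [WellFormed, absArrays, List.forall_mem_append, List.pairwise_append,
    disjoint_left, mem_footprint]
  constructor
  · rintro ⟨⟨hF, hG⟩, pF, pG, cross⟩
    refine ⟨⟨hF, pF⟩, ⟨hG, pG⟩, ?_⟩
    rintro x ⟨p, hp, hpx⟩ ⟨q, hq, hqx⟩
    have := cross p hp q hq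
    omega
  · rintro ⟨⟨hF, pF⟩, ⟨hG, pG⟩, hdisj⟩
    refine ⟨⟨hF, hG⟩, pF, pG, fun p hp q hq => ?_⟩
    by_contra! h
    have := hF p hp
    have := hG q hq
    exact hdisj ⟨p, hp, le_max_left _ (q.1.eval s), by omega⟩ ⟨q, hq, le_max_right _ _, by omega⟩

lemma sat.wellFormed_and_keys {F : Spatial} {h : Heap} (hF : F.sat s h) :
    F.WellFormed s ∧ h.keys = F.footprint s := by
  induction F generalizing h with
  | emp => subst hF; simp [WellFormed, absArrays, footprint]
  | pto t u => simp [WellFormed, absArrays, footprint, hF.1]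
  | arr t u => simp [WellFormed, absArrays, footprint, hF.1, hF.2]
  | star F G ihF ihG =>
    obtain ⟨h₁, h₂, hdisj, rfl, h₁F, h₂G⟩ := hF
    obtain ⟨wF, kF⟩ := ihF h₁F
    obtain ⟨wG, kG⟩ := ihG h₂G
    rw [Finmap.disjoint_iff_disjoint_keys, kF, kG] at hdisj
    exact ⟨wellFormed_star_iff.mpr ⟨wF, wG, hdisj⟩, by rw [Finmap.keys_union, kF, kG]; rfl⟩

lemma exists_sat_of_wellFormed {F : Spatial} (hF : F.WellFormed s) :
    ∃ h : Heap, F.sat s h ∧ h.keys = F.footprint s := by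
  induction F with
  | emp => exact ⟨∅, rfl, rfl⟩
  | pto t u =>
    exact ⟨Finmap.singleton (t.eval s) (u.eval s),
      ⟨Finmap.keys_singleton _ _, Finmap.lookup_singleton_eq⟩, Finmap.keys_singleton _ _⟩
  | arr t u =>
    obtain ⟨h, hk⟩ := exists_heap_keys (Icc (t.eval s) (u.eval s))
    exact ⟨h, ⟨hF.1 _ List.mem_cons_self, hk⟩, hk⟩
  | star F G ihF ihG =>
    obtain ⟨wF, wG, hdisj⟩ := wellFormed_star_iff.mp hF
    obtain ⟨h₁, h₁F, kF⟩ := ihF wF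
    obtain ⟨h₂, h₂G, kG⟩ := ihG wG
    refine ⟨h₁ ∪ h₂, ⟨h₁, h₂, ?_, rfl, h₁F, h₂G⟩, by rw [Finmap.keys_union, kF, kG]; rfl⟩
    rwa [Finmap.disjoint_iff_disjoint_keys, kF, kG]

end Spatial

lemma SymHeap.satisfiable_iff_exists_gammaSat (A : SymHeap) :
    A.Satisfiable ↔ ∃ s, gammaSat A s := by
  constructor
  · rintro ⟨s, h, hpure, hsp⟩
    exact ⟨s, hpure, hsp.wellFormed_and_keys.1⟩
  · rintro ⟨s, hpure, hwf⟩
    obtain ⟨h, hsp, -⟩ := Spatial.exists_sat_of_wellFormed hwf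
    exact ⟨s, h, hpure, hsp⟩

lemma add_mul_succ_add_lt {x y B : ℕ} (h : x < y) : x * (B + 1) + B < y * (B + 1) := by
  nlinarith

lemma exists_slot {D B m a k : ℕ} (hD : D ≤ a) (hlt : a + k < D + m * (B + 1))
    (hsep : ∀ i ≤ m, D + i * (B + 1) ≤ a ∨ a + k < D + i * (B + 1)) :
    ∃ i < m, D + i * (B + 1) ≤ a ∧ a + k ≤ D + i * (B + 1) + B := by
  obtain ⟨t, rfl⟩ : ∃ t, a = D + t := ⟨a - D, by omega⟩
  have hB : 0 < B + 1 := B.succ_pos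
  have hdiv := Nat.div_add_mod t (B + 1)
  have hmod := Nat.mod_lt t hB
  have him : t / (B + 1) < m := by
    rw [Nat.div_lt_iff_lt_mul hB]; omega
  refine ⟨t / (B + 1), him, by linarith [Nat.zero_le (t % (B + 1))], ?_⟩
  rcases hsep (t / (B + 1) + 1) him with h | h <;> linarith

lemma sum_le_of_pairwiseDisjoint_Icc {ι : Type*} {S : Finset ι} {a k : ι → ℕ} {c B : ℕ}
    (hsub : ∀ j ∈ S, c ≤ a j ∧ a j + k j ≤ c + B)
    (hdisj : (S : Set ι).PairwiseDisjoint fun j => Icc (a j + 1) (a j + k j)) :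
    ∑ j ∈ S, k j ≤ B :=
  calc ∑ j ∈ S, k j = ∑ j ∈ S, #(Icc (a j + 1) (a j + k j)) := by simp
    _ = #(S.biUnion fun j => Icc (a j + 1) (a j + k j)) := (card_biUnion hdisj).symm
    _ ≤ #(Icc (c + 1) (c + B)) := by
        refine card_le_card (biUnion_subset.mpr fun j hj => Icc_subset_Icc ?_ ?_) <;>
          linarith [hsub j hj]
    _ = B := by simp

lemma card_eq_three_of_sum_eq {ι : Type*} {S : Finset ι} {k : ι → ℕ} {B : ℕ}
    (hB : 0 < B) (hS : ∑ j ∈ S, k j = B) (hk : ∀ j ∈ S, B < 4 * k j ∧ 2 * k j < B) :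
    #S = 3 := by
  have hne : S.Nonempty := by
    refine nonempty_iff_ne_empty.mpr fun h => ?_
    simp [h] at hS
    omega
  have hlt4 : #S * B < 4 * B :=
    calc #S * B = ∑ _j ∈ S, B := by simp
      _ < ∑ j ∈ S, 4 * k j := sum_lt_sum_of_nonempty hne fun j hj => (hk j hj).1
      _ = 4 * B := by rw [← mul_sum, hS]
  have hgt2 : 2 * B < #S * B :=
    calc 2 * B = ∑ j ∈ S, 2 * k j := by rw [← mul_sum, hS]
      _ < ∑ _j ∈ S, B := sum_lt_sum_of_nonempty hne fun j hj => (hk j hj).2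
      _ = #S * B := by simp
  have := lt_of_mul_lt_mul_right hlt4 (Nat.zero_le _)
  have := lt_of_mul_lt_mul_right hgt2 (Nat.zero_le _)
  omega

lemma exists_packing {ι κ : Type*} [Fintype ι] [LinearOrder ι] [DecidableEq κ]
    (f : ι → κ) (k : ι → ℕ) {B : ℕ} (hB : ∀ i, ∑ j with f j = i, k j ≤ B) :
    ∃ off : ι → ℕ, (∀ j, off j + k j ≤ B) ∧
      ∀ j j', f j = f j' → j < j' → off j + k j ≤ off j' := by
  set off : ι → ℕ := fun j => ∑ j' with f j' = f j ∧ j' < j, k j'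
  have hle : ∀ j (U : Finset ι), (∀ x, x = j ∨ f x = f j ∧ x < j → x ∈ U) →
      off j + k j ≤ ∑ x ∈ U, k x := by
    intro j U hU
    rw [add_comm, ← sum_insert (s := {j' | f j' = f j ∧ j' < j}) (by simp)]
    exact sum_le_sum_of_subset fun x hx => hU x (by simpa using hx)
  refine ⟨off, fun j => (hle j _ ?_).trans (hB (f j)), fun j j' hf hlt => hle j _ ?_⟩
  · rintro x (rfl | ⟨h, -⟩) <;> simp [*]
  · rintro x (rfl | ⟨h, h'⟩)
    · simp [hf, hlt]
    · simp [h.trans hf, h'.trans hlt]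

lemma hasThreePartition_iff_exists_fiber_sum_le {m B : ℕ} {k : Fin (3 * m) → ℕ}
    (hsum : ∑ j, k j = m * B) (hbound : ∀ j, B < 4 * k j ∧ 2 * k j < B) :
    HasThreePartition m B k ↔ ∃ f : Fin (3 * m) → Fin m, ∀ i, ∑ j with f j = i, k j ≤ B := by
  refine ⟨fun ⟨f, hf⟩ => ⟨f, fun i => (hf i).2.le⟩, fun ⟨f, hf⟩ => ⟨f, fun i => ?_⟩⟩
  have heq : ∑ j with f j = i, k j = B := by
    refine (sum_eq_sum_iff_of_le fun i _ => hf i).mp ?_ i (mem_univ i)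
    rw [sum_fiberwise, hsum]
    simp
  have hB : 0 < B := by
    have := hbound ⟨i, by omega⟩
    omega
  exact ⟨card_eq_three_of_sum_eq hB heq fun j _ => hbound j, heq⟩

section heapABS

variable {m B : ℕ} {k : Fin (3 * m) → ℕ}

lemma gammaSat_heapABS_iff {s : Stack} :
    gammaSat (heapABS m B k) s ↔
      (∀ i : Fin m, s (i + 1) = s i + (B + 1)) ∧
      (∀ j : Fin (3 * m), s 0 ≤ s (m + 1 + j) ∧ s (m + 1 + j) + k j < s m) ∧
      (∀ j : Fin (3 * m), 0 < k j) ∧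
      (∀ ⦃i i' : Fin (m + 1)⦄, i < i' → s i < s i' ∨ s i' < s i) ∧
      (∀ ⦃j j' : Fin (3 * m)⦄, j < j' →
        s (m + 1 + j) + k j < s (m + 1 + j') + 1 ∨ s (m + 1 + j') + k j' < s (m + 1 + j) + 1) ∧
      (∀ (i : Fin (m + 1)) (j : Fin (3 * m)),
        s i < s (m + 1 + j) + 1 ∨ s (m + 1 + j) + k j < s i) := by
  simp only [gammaSat, heapABS, PureF.sat_bigAnd, Spatial.absArrays,
    Spatial.absArrays_bigStar_arr, List.pairwise_append, List.pairwise_ofFn, PureF.sat, Trm.eval,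
    List.forall_mem_ofFn_iff, List.forall_mem_append, le_refl, implies_true, true_and,
    Nat.add_le_add_iff_left, and_assoc]
  exact Iff.rfl

lemma exists_fiber_sum_le_of_gammaSat_heapABS {s : Stack} (h : gammaSat (heapABS m B k) s) :
    ∃ f : Fin (3 * m) → Fin m, ∀ i, ∑ j with f j = i, k j ≤ B := by
  obtain ⟨hstep, hbnd, -, -, hdisj, hsep⟩ := gammaSat_heapABS_iff.mp h
  have hd : ∀ i ≤ m, s i = s 0 + i * (B + 1) := by
    intro i hi
    induction i with
    | zero => simp
    | succ i ih => rw [hstep ⟨i, hi⟩, ih (by omega)]; ring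
  have hslot : ∀ j : Fin (3 * m), ∃ i : Fin m,
      s 0 + i * (B + 1) ≤ s (m + 1 + j) ∧ s (m + 1 + j) + k j ≤ s 0 + i * (B + 1) + B := by
    intro j
    obtain ⟨i, hi, hslot⟩ := exists_slot (hbnd j).1 (hd m le_rfl ▸ (hbnd j).2) fun i hi => by
      have := hsep ⟨i, by omega⟩ j
      rw [hd i hi] at this
      omega
    exact ⟨⟨i, hi⟩, hslot⟩
  choose f hf using hslot
  refine ⟨f, fun i => sum_le_of_pairwiseDisjoint_Icc
    (a := fun j : Fin (3 * m) => s (m + 1 + j)) (c := s 0 + i * (B + 1)) ?_ ?_⟩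
  · intro j hj
    obtain rfl := (mem_filter.mp hj).2
    exact hf j
  · intro j _ j' _ hne
    simp only [Function.onFun, disjoint_left, mem_Icc]
    rcases hne.lt_or_gt with hlt | hlt
    · have := hdisj hlt; omega
    · have := hdisj hlt; omega

lemma exists_gammaSat_heapABS (hk : ∀ j, 0 < k j) {f : Fin (3 * m) → Fin m}
    (hf : ∀ i, ∑ j with f j = i, k j ≤ B) : ∃ s, gammaSat (heapABS m B k) s := by
  obtain ⟨off, hoff, hord⟩ := exists_packing f k hf
  let s : Stack := fun x =>
    if x ≤ m then x * (B + 1)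
    else if h : x - (m + 1) < 3 * m then f ⟨x - (m + 1), h⟩ * (B + 1) + off ⟨x - (m + 1), h⟩
    else 0
  have hs_d : ∀ i ≤ m, s i = i * (B + 1) := fun i hi => if_pos hi
  have hs_a : ∀ j : Fin (3 * m), s (m + 1 + j) = f j * (B + 1) + off j := fun j => by
    have : ¬ m + 1 + j ≤ m := by omega
    simp [s, this]
  refine ⟨s, gammaSat_heapABS_iff.mpr ⟨fun i => ?_, fun j => ?_, hk, fun i i' hi => ?_,
    fun j j' hj => ?_, fun i j => ?_⟩⟩
  · rw [hs_d (i + 1) i.2, hs_d i i.2.le]; ring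
  · rw [hs_d 0 (Nat.zero_le m), hs_d m le_rfl, hs_a]
    have := add_mul_succ_add_lt (B := B) (f j).2
    have := hoff j
    omega
  · rw [hs_d i (Nat.lt_succ_iff.mp i.2), hs_d i' (Nat.lt_succ_iff.mp i'.2)]
    have := add_mul_succ_add_lt (B := B) hi
    omega
  · rw [hs_a, hs_a]
    have := hoff j
    have := hoff j'
    rcases lt_trichotomy (f j) (f j') with hlt | hfeq | hgt
    · have := add_mul_succ_add_lt (B := B) hlt; omega
    · have := hord j j' hfeq hj; rw [hfeq]; omega
    · have := add_mul_succ_add_lt (B := B) hgt; omega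
  · rw [hs_d i (Nat.lt_succ_iff.mp i.2), hs_a]
    have := hoff j
    rcases le_or_gt i.1 (f j) with hle | hgt
    · have := Nat.mul_le_mul_right (B + 1) hle; omega
    · have := add_mul_succ_add_lt (B := B) hgt; omega

lemma exists_gammaSat_heapABS_iff (hk : ∀ j, 0 < k j) :
    (∃ s, gammaSat (heapABS m B k) s) ↔
      ∃ f : Fin (3 * m) → Fin m, ∀ i, ∑ j with f j = i, k j ≤ B :=
  ⟨fun ⟨_, h⟩ => exists_fiber_sum_le_of_gammaSat_heapABS h,
    fun ⟨_, hf⟩ => exists_gammaSat_heapABS hk hf⟩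

end heapABS

/-- Reduction of 3-partition to ASL satisfiability: given a 3-partition instance
`(B, S)` (so `Σ kⱼ = m·B` and `B/4 < kⱼ < B/2` for all `j`), the symbolic heap
`A_{B,S}` is satisfiable iff there is a complete 3-partition of `S` w.r.t. `B`. -/
theorem stmt_5 (m B : ℕ) (k : Fin (3 * m) → ℕ)
    (hsum : ∑ j, k j = m * B)
    (hbound : ∀ j, B < 4 * k j ∧ 2 * k j < B) :
    (heapABS m B k).Satisfiable ↔ HasThreePartition m B k := by
  have hk : ∀ j, 0 < k j := fun j => by have := hbound j; omega
  rw [SymHeap.satisfiable_iff_exists_gammaSat, exists_gammaSat_heapABS_iff hk,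
    hasThreePartition_iff_exists_fiber_sum_le hsum hbound]
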